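/- Let k be a field, p ≥ 2, n ≥ p, and keep the notation of the blow-up chart: R = k[x_1,…,x_n], S = k[y_1,…,y_{p−1}, x_p,…,x_n] with φ : R → S, φ(x_i) = y_i x_p for i < p, φ(x_i) = x_i for i ≥ p. Then the image of the S-module map S ⊗_R M → S^n (induced by the inclusion M ⊆ R^n and base change along φ) is the free S-submodule generated by x_p e_j for 1 ≤ j ≤ p and e_k for p < k ≤ n, where M ⊆ R^n is the submodule generated by x_i e_j (i, j ≤ p) and e_k (k > p). -/

import Mathlib

open MvPolynomial TensorProduct

set_option maxHeartbeats 1000000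
set_option synthInstance.maxHeartbeats 400000

variable (k : Type*) [Field k] (n p : ℕ)

/-- R = k[x₁,…,x_n] (variables indexed by `Fin n`; the 1-indexed variable x_i of
the statement is the variable with index i - 1). -/
abbrev R := MvPolynomial (Fin n) k

/-- S = k[y₁,…,y_{p-1}, x_p,…,x_n]: a polynomial ring whose variables are indexed
by `Fin (p-1) ⊕ Fin (n-p+1)`, the variable `Sum.inl i` being y_{i+1} and the
variable `Sum.inr l` being x_{p+l}. -/
abbrev S := MvPolynomial (Fin (p - 1) ⊕ Fin (n - p + 1)) k

/-- The variable x_p of S. -/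
noncomputable def xp : S k n p := X (Sum.inr ⟨0, by omega⟩)

/-- The k-algebra map φ : R → S of the blow-up chart, with φ(x_i) = y_i x_p for
i < p and φ(x_i) = x_i for i ≥ p. -/
noncomputable def phi (hp : 2 ≤ p) (hpn : p ≤ n) : R k n →+* S k n p :=
  (aeval fun i : Fin n =>
    if h : (i : ℕ) < p - 1 then X (Sum.inl ⟨i, h⟩) * xp k n p
    else X (Sum.inr ⟨(i : ℕ) - (p - 1), by omega⟩)).toRingHom

/-- The submodule M ⊆ R^n generated by the m_{i,j} = x_i e_j (i, j ≤ p) and the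
e_k (k > p). -/
noncomputable def M : Submodule (R k n) (Fin n → R k n) :=
  Submodule.span (R k n)
    ({v | ∃ i j : Fin n, (i : ℕ) < p ∧ (j : ℕ) < p ∧ v = Pi.single j (X i)} ∪
     {v | ∃ l : Fin n, p ≤ (l : ℕ) ∧ v = Pi.single l 1})

/-!
Every `φ(x_i)` with `i ≤ p` is divisible by `x_p = φ(x_p)`, so the images of the generators
`x_i e_j` of `M` are `S`-multiples of the `x_p e_j`, which are themselves among these images; the
image of `S ⊗_R M` is the `S`-span of the images of the generators of `M`. The `x_p e_j` and `e_k`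
are nonzero multiples of distinct coordinate vectors over the domain `S`, hence independent.
-/
theorem LinearMap.range_liftBaseChange_comp_span_subtype {R A M N : Type*} [CommSemiring R]
    [CommSemiring A] [Algebra R A] [AddCommMonoid M] [Module R M] [AddCommMonoid N] [Module R N]
    [Module A N] [IsScalarTower R A N] (F : M →ₗ[R] N) (s : Set M) :
    LinearMap.range ((F ∘ₗ (Submodule.span R s).subtype).liftBaseChange A) =
      Submodule.span A (F '' s) := by
  rw [LinearMap.range_liftBaseChange, LinearMap.range_comp, Submodule.range_subtype,
    Submodule.map_span, Submodule.span_span_of_tower]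

theorem comp_piSingle_of_map_zero {ι α β : Type*} [DecidableEq ι] [Zero α] [Zero β] {f : α → β}
    (hf : f 0 = 0) (j : ι) (a : α) : f ∘ Pi.single j a = Pi.single j (f a) :=
  funext <| Pi.apply_single (fun _ => f) (fun _ => hf) j a

def mGenerators : Set (Fin n → R k n) :=
  {v | ∃ i j : Fin n, (i : ℕ) < p ∧ (j : ℕ) < p ∧ v = Pi.single j (X i)} ∪
    {v | ∃ l : Fin n, p ≤ (l : ℕ) ∧ v = Pi.single l 1}

noncomputable def chartWeight (j : Fin n) : S k n p := if (j : ℕ) < p then xp k n p else 1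

section BlowupChart

variable {n p}

theorem chartWeight_ne_zero (j : Fin n) : chartWeight k n p j ≠ 0 := by
  unfold chartWeight xp
  split_ifs
  exacts [X_ne_zero _, one_ne_zero]

theorem phi_X_pred (hp : 2 ≤ p) (hpn : p ≤ n) :
    phi k n p hp hpn (X ⟨p - 1, by omega⟩) = xp k n p := by
  simp only [phi, AlgHom.toRingHom_eq_coe, RingHom.coe_coe, aeval_X, lt_irrefl, dite_false,
    Nat.sub_self]
  rfl

theorem xp_dvd_phi_X (hp : 2 ≤ p) (hpn : p ≤ n) {i : Fin n} (hi : (i : ℕ) < p) :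
    xp k n p ∣ phi k n p hp hpn (X i) := by
  by_cases h : (i : ℕ) < p - 1
  · simp only [phi, AlgHom.toRingHom_eq_coe, RingHom.coe_coe, aeval_X, dif_pos h]
    exact dvd_mul_left _ _
  · have hi' : i = ⟨p - 1, by omega⟩ := Fin.ext (by simp only; omega)
    rw [hi', phi_X_pred]

theorem span_phi_mGenerators (hp : 2 ≤ p) (hpn : p ≤ n) :
    Submodule.span (S k n p) ((fun v => phi k n p hp hpn ∘ v) '' mGenerators k n p) =
      Submodule.span (S k n p) (Set.range fun j => Pi.single j (chartWeight k n p j)) := by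
  have hphi (j : Fin n) (q : R k n) :
      phi k n p hp hpn ∘ Pi.single j q = Pi.single j (phi k n p hp hpn q) :=
    comp_piSingle_of_map_zero (map_zero _) j q
  apply Submodule.span_eq_span
  · rintro _ ⟨_, ⟨i, j, hi, hj, rfl⟩ | ⟨l, hl, rfl⟩, rfl⟩
    · obtain ⟨c, hc⟩ := xp_dvd_phi_X k hp hpn hi
      have : Pi.single j (phi k n p hp hpn (X i)) = c • Pi.single j (chartWeight k n p j) := by
        rw [hc, chartWeight, if_pos hj, ← Pi.single_smul, smul_eq_mul, mul_comm]
      simp only [hphi, this]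
      exact Submodule.smul_mem _ _ (Submodule.subset_span ⟨j, rfl⟩)
    · refine Submodule.subset_span ⟨l, ?_⟩
      simp only [hphi, map_one, chartWeight, if_neg (not_lt.mpr hl)]
  · refine Set.Subset.trans ?_ Submodule.subset_span
    rintro _ ⟨j, rfl⟩
    by_cases hj : (j : ℕ) < p
    · refine ⟨Pi.single j (X ⟨p - 1, by omega⟩),
        Or.inl ⟨_, j, by simp only; omega, hj, rfl⟩, ?_⟩
      simp only [hphi, phi_X_pred, chartWeight, if_pos hj]
    · refine ⟨Pi.single j 1, Or.inr ⟨j, not_lt.mp hj, rfl⟩, ?_⟩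
      simp only [hphi, map_one, chartWeight, if_neg hj]

end BlowupChart

/-- The image of the S-module map S ⊗_R M → S^n — induced by the inclusion
M ⊆ R^n and base change along the blow-up chart map φ : R → S, identifying
S ⊗_R R^n with S^n — is the free S-submodule of S^n generated by the x_p e_j
(j ≤ p) and the e_k (k > p). -/
theorem image_of_base_change (hp : 2 ≤ p) (hpn : p ≤ n) :
    letI : Algebra (R k n) (S k n p) := (phi k n p hp hpn).toAlgebra
    let f : (M k n p) →ₗ[R k n] (Fin n → S k n p) :=
      ((Algebra.linearMap (R k n) (S k n p)).compLeft (Fin n)).comp (M k n p).subtype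
    let g : Fin n → (Fin n → S k n p) := fun j =>
      if (j : ℕ) < p then Pi.single j (xp k n p) else Pi.single j 1
    LinearMap.range (f.liftBaseChange (S k n p)) = Submodule.span (S k n p) (Set.range g) ∧
      LinearIndependent (S k n p) g := by
  let _ : Algebra (R k n) (S k n p) := (phi k n p hp hpn).toAlgebra
  intro f g
  have hg : g = fun j => Pi.single j (chartWeight k n p j) := by
    funext j
    simp only [g, chartWeight]
    split_ifs <;> rfl
  refine ⟨?_, hg ▸ Pi.linearIndependent_single_of_ne_zero (chartWeight_ne_zero k)⟩
  rw [hg, ← span_phi_mGenerators k hp hpn]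
  exact LinearMap.range_liftBaseChange_comp_span_subtype _ _
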